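/- arXiv:2110.00930 — 3 statements merged into one kernel-verified Lean document; each statement's English description precedes it below -/
import Mathlib

section
/- In a category base (X, C), the intersection of two regions either contains a region or is a singular set. -/
open Set

/-- A category base: a family of subsets covering `X`, whose nonempty members
are called *regions*, satisfying Morgan's axioms. -/
structure CategoryBase (X : Type*) where
  base : Set (Set X)
  cover : ⋃₀ base = Set.univ
  ax2a : ∀ A ∈ base, A.Nonempty → ∀ D ⊆ base, D.Nonempty → (∀ d ∈ D, d.Nonempty) →
    D.Pairwise Disjoint → Cardinal.mk ↥D < Cardinal.mk ↥base →
    (∃ B ∈ base, B.Nonempty ∧ B ⊆ A ∩ ⋃₀ D) →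
      ∃ d ∈ D, ∃ B ∈ base, B.Nonempty ∧ B ⊆ A ∩ d
  ax2b : ∀ A ∈ base, A.Nonempty → ∀ D ⊆ base, D.Nonempty → (∀ d ∈ D, d.Nonempty) →
    D.Pairwise Disjoint → Cardinal.mk ↥D < Cardinal.mk ↥base →
    (¬ ∃ B ∈ base, B.Nonempty ∧ B ⊆ A ∩ ⋃₀ D) →
      ∃ B ∈ base, B.Nonempty ∧ B ⊆ A ∧ ∀ d ∈ D, Disjoint B d

namespace CategoryBase

variable {X : Type*} (cb : CategoryBase X)

/-- A region is a nonempty member of the base. -/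
def IsRegion (A : Set X) : Prop := A ∈ cb.base ∧ A.Nonempty

/-- `S` is singular if every region contains a subregion disjoint from `S`. -/
def Singular (S : Set X) : Prop :=
  ∀ A, cb.IsRegion A → ∃ B, cb.IsRegion B ∧ B ⊆ A ∧ Disjoint B S

/-- `S` is meager if it is a countable union of singular sets. -/
def Meager (S : Set X) : Prop :=
  ∃ f : ℕ → Set X, (∀ n, cb.Singular (f n)) ∧ S = ⋃ n, f n

/-- `S` is abundant if it is not meager. -/
def Abundant (S : Set X) : Prop := ¬ cb.Meager S

/-- `S` is abundant everywhere in the region `A` : `S` is abundant in every subregion of `A`. -/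
def AbundantEverywhereIn (S A : Set X) : Prop :=
  ∀ B, cb.IsRegion B → B ⊆ A → cb.Abundant (S ∩ B)

/-- `S` is a Baire set if every region has a subregion in which `S` or its complement is meager. -/
def BaireSet (S : Set X) : Prop :=
  ∀ A, cb.IsRegion A → ∃ B, cb.IsRegion B ∧ B ⊆ A ∧
    (cb.Meager (S ∩ B) ∨ cb.Meager (Sᶜ ∩ B))

/-- `S` is locally abundant at `x`. -/
def LocallyAbundantAt (S : Set X) (x : X) : Prop :=
  ∃ A, cb.IsRegion A ∧ x ∈ A ∧ ∀ B, cb.IsRegion B → B ⊆ A → x ∈ B → cb.Abundant (S ∩ B)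

/-- The set of cluster points of `S`. -/
def cluster (S : Set X) : Set X := {x | cb.LocallyAbundantAt S x}

end CategoryBase

/-- `S` is open in the `D`-topology iff `D (X \ S) ⊆ X \ S`. -/
def DOpen {X : Type*} (D : Set X → Set X) (S : Set X) : Prop := D Sᶜ ⊆ Sᶜ

/-- `S` is nowhere dense in the `D`-topology: every nonempty `D`-open set contains a
nonempty `D`-open subset disjoint from `S`. -/
def TauNowhereDense {X : Type*} (D : Set X → Set X) (S : Set X) : Prop :=
  ∀ U, DOpen D U → U.Nonempty → ∃ V, DOpen D V ∧ V.Nonempty ∧ V ⊆ U ∧ Disjoint V S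

/-- `S` is of the first category in the `D`-topology: a countable union of nowhere dense sets. -/
def TauFirstCategory {X : Type*} (D : Set X → Set X) (S : Set X) : Prop :=
  ∃ f : ℕ → Set X, (∀ n, TauNowhereDense D (f n)) ∧ S = ⋃ n, f n

/-- `S` has the Baire property in the `D`-topology: it differs from a `D`-open set by a
first category set. -/
def TauBaireProperty {X : Type*} (D : Set X → Set X) (S : Set X) : Prop :=
  ∃ U, DOpen D U ∧ TauFirstCategory D ((S \ U) ∪ (U \ S))

/-!
Applying axiom (ii) to the one-member family `{A}` shows that every region `E` has a subregion
lying inside `A` or disjoint from `A`. Doing this first for `A`, then for `B` inside the resulting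
subregion, yields a subregion of `E` inside `A ∩ B` or disjoint from `A ∩ B`; if `A ∩ B` contains
no region, only the second alternative can occur, so `A ∩ B` is singular.
-/

namespace CategoryBase

variable {X : Type*} (cb : CategoryBase X)

theorem exists_region_subset_and_subset_or_disjoint {A E : Set X} (hA : cb.IsRegion A)
    (hE : cb.IsRegion E) : ∃ F, cb.IsRegion F ∧ F ⊆ E ∧ (F ⊆ A ∨ Disjoint F A) := by
  by_cases hcard : (1 : Cardinal) < Cardinal.mk cb.base
  · by_cases hin : ∃ F ∈ cb.base, F.Nonempty ∧ F ⊆ E ∩ ⋃₀ {A}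
    · obtain ⟨F, hFb, hFne, hFsub⟩ := hin
      rw [sUnion_singleton] at hFsub
      exact ⟨F, ⟨hFb, hFne⟩, hFsub.trans inter_subset_left,
        Or.inl (hFsub.trans inter_subset_right)⟩
    · obtain ⟨F, hFb, hFne, hFE, hFdisj⟩ :=
        cb.ax2b E hE.1 hE.2 {A} (singleton_subset_iff.2 hA.1) (singleton_nonempty A)
          (by rintro d rfl; exact hA.2) (pairwise_singleton _ _) (by simpa using hcard) hin
      exact ⟨F, ⟨hFb, hFne⟩, hFE, Or.inr (hFdisj A rfl)⟩
  · -- a base with at most one member has `E = A`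
    have hEA : E = A := (Cardinal.mk_le_one_iff_set_subsingleton.1 (not_lt.1 hcard)) hE.1 hA.1
    exact ⟨E, hE, subset_rfl, Or.inl hEA.le⟩

theorem exists_region_subset_and_subset_inter_or_disjoint {A B E : Set X} (hA : cb.IsRegion A)
    (hB : cb.IsRegion B) (hE : cb.IsRegion E) :
    ∃ G, cb.IsRegion G ∧ G ⊆ E ∧ (G ⊆ A ∩ B ∨ Disjoint G (A ∩ B)) := by
  obtain ⟨F, hF, hFE, hFA | hFA⟩ := cb.exists_region_subset_and_subset_or_disjoint hA hE
  · obtain ⟨G, hG, hGF, hGB | hGB⟩ := cb.exists_region_subset_and_subset_or_disjoint hB hF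
    · exact ⟨G, hG, hGF.trans hFE, Or.inl (subset_inter (hGF.trans hFA) hGB)⟩
    · exact ⟨G, hG, hGF.trans hFE, Or.inr (hGB.mono_right inter_subset_right)⟩
  · exact ⟨F, hF, hFE, Or.inr (hFA.mono_right inter_subset_left)⟩

end CategoryBase

/-- In a category base, the intersection of two regions either contains a region
or is a singular set. -/
theorem stmt_4 {X : Type*} (cb : CategoryBase X) (A B : Set X)
    (hA : cb.IsRegion A) (hB : cb.IsRegion B) :
    (∃ C, cb.IsRegion C ∧ C ⊆ A ∩ B) ∨ cb.Singular (A ∩ B) := by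
  refine or_iff_not_imp_left.2 fun hno E hE => ?_
  obtain ⟨G, hG, hGE, hGAB | hGAB⟩ := cb.exists_region_subset_and_subset_inter_or_disjoint hA hB hE
  · exact absurd ⟨G, hG, hGAB⟩ hno
  · exact ⟨G, hG, hGE, hGAB⟩
end

section
/- In a category base (X, C), if a set S is abundant, then there exists a region C such that S is abundant in every subregion of C (the Fundamental Theorem). -/
open Set

/-!
Suppose `S` is abundant in no region, i.e. every region `A` has a subregion `B` with `S ∩ B`
meager. Enumerating the base in order type the initial ordinal of its cardinality and choosing,
at each stage, such a subregion disjoint from the earlier choices gives a disjoint family `D`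
of regions which every region meets in a subregion: at each stage fewer than `#base` sets have
been chosen, which is exactly what Morgan's axioms need. If `S ∩ d = ⋃ₙ Mₙ(d)` with `Mₙ(d)`
singular, then each `⋃_d Mₙ(d)` is singular because the `d` are disjoint, and `S \ ⋃₀ D` is
singular because `D` is dense; so `S` is meager.
-/

namespace CategoryBase

open Cardinal Function

universe u

variable {X : Type u} (cb : CategoryBase X)

def IsDenseFamily (D : Set (Set X)) : Prop :=
  ∀ A, cb.IsRegion A → ∃ d ∈ D, ∃ B, cb.IsRegion B ∧ B ⊆ A ∩ d

variable {cb}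

theorem Singular.mono {S T : Set X} (hT : cb.Singular T) (hST : S ⊆ T) : cb.Singular S :=
  fun A hA ↦
    let ⟨B, hB, hBA, hBT⟩ := hT A hA
    ⟨B, hB, hBA, hBT.mono_right hST⟩

theorem Singular.union {S T : Set X} (hS : cb.Singular S) (hT : cb.Singular T) :
    cb.Singular (S ∪ T) := by
  intro A hA
  obtain ⟨B, hB, hBA, hBS⟩ := hS A hA
  obtain ⟨B', hB', hB'B, hB'T⟩ := hT B hB
  exact ⟨B', hB', hB'B.trans hBA, disjoint_union_right.2 ⟨hBS.mono_left hB'B, hB'T⟩⟩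

theorem meager_of_subset_iUnion {S : Set X} (f : ℕ → Set X) (hf : ∀ n, cb.Singular (f n))
    (hS : S ⊆ ⋃ n, f n) : cb.Meager S :=
  ⟨fun n ↦ S ∩ f n, fun n ↦ (hf n).mono inter_subset_right, by
    rw [← inter_iUnion, inter_eq_left.2 hS]⟩

theorem IsDenseFamily.singular_compl_sUnion {D : Set (Set X)} (hD : cb.IsDenseFamily D) :
    cb.Singular (⋃₀ D)ᶜ := by
  intro A hA
  obtain ⟨d, hdD, B, hB, hBAd⟩ := hD A hA
  refine ⟨B, hB, hBAd.trans inter_subset_left, disjoint_compl_right_iff.2 ?_⟩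
  exact (hBAd.trans inter_subset_right).trans (subset_sUnion_of_mem hdD)

theorem IsDenseFamily.singular_biUnion {D : Set (Set X)} (hD : cb.IsDenseFamily D)
    (hdisj : D.Pairwise Disjoint) {f : Set X → Set X} (hfD : ∀ d ∈ D, f d ⊆ d)
    (hf : ∀ d ∈ D, cb.Singular (f d)) : cb.Singular (⋃ d ∈ D, f d) := by
  intro A hA
  obtain ⟨d, hdD, B, hB, hBAd⟩ := hD A hA
  obtain ⟨B', hB', hB'B, hB'f⟩ := hf d hdD B hB
  have hB'd : B' ⊆ d := hB'B.trans (hBAd.trans inter_subset_right)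
  refine ⟨B', hB', hB'B.trans (hBAd.trans inter_subset_left), ?_⟩
  simp only [disjoint_iUnion_right]
  intro d' hd'D
  obtain rfl | hne := eq_or_ne d d'
  · exact hB'f
  · exact (hdisj hdD hd'D hne).mono hB'd (hfD d' hd'D)

theorem IsDenseFamily.meager_of_meager_inter {D : Set (Set X)} (hD : cb.IsDenseFamily D)
    (hdisj : D.Pairwise Disjoint) {S : Set X} (hS : ∀ d ∈ D, cb.Meager (S ∩ d)) :
    cb.Meager S := by
  choose! M hM hSM using hS
  have hMd : ∀ d ∈ D, ∀ n, M d n ⊆ d := fun d hd n ↦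
    (subset_iUnion (M d) n).trans ((hSM d hd).symm.subset.trans inter_subset_right)
  refine meager_of_subset_iUnion (fun n ↦ (⋃₀ D)ᶜ ∪ ⋃ d ∈ D, M d n)
    (fun n ↦ hD.singular_compl_sUnion.union
      (hD.singular_biUnion hdisj (fun d hd ↦ hMd d hd n) (fun d hd ↦ hM d hd n))) ?_
  intro x hxS
  by_cases hx : x ∈ ⋃₀ D
  · obtain ⟨d, hdD, hxd⟩ := hx
    obtain ⟨n, hxn⟩ := mem_iUnion.1 ((hSM d hdD).subset ⟨hxS, hxd⟩)
    exact mem_iUnion.2 ⟨n, Or.inr (mem_biUnion hdD hxn)⟩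
  · exact mem_iUnion.2 ⟨0, Or.inl hx⟩

theorem exists_subregion_inter_or_disjoint {A : Set X} (hA : cb.IsRegion A) {D : Set (Set X)}
    (hD : ∀ d ∈ D, cb.IsRegion d) (hdisj : D.Pairwise Disjoint) (hcard : #D < #cb.base) :
    (∃ d ∈ D, ∃ B, cb.IsRegion B ∧ B ⊆ A ∩ d) ∨
      ∃ B, cb.IsRegion B ∧ B ⊆ A ∧ ∀ d ∈ D, Disjoint B d := by
  obtain rfl | hDne := D.eq_empty_or_nonempty
  · exact Or.inr ⟨A, hA, subset_rfl, by simp⟩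
  have hDbase : D ⊆ cb.base := fun d hd ↦ (hD d hd).1
  have hDnonempty : ∀ d ∈ D, d.Nonempty := fun d hd ↦ (hD d hd).2
  by_cases hmeet : ∃ B ∈ cb.base, B.Nonempty ∧ B ⊆ A ∩ ⋃₀ D
  · obtain ⟨d, hdD, B, hB, hBne, hBAd⟩ :=
      cb.ax2a A hA.1 hA.2 D hDbase hDne hDnonempty hdisj hcard hmeet
    exact Or.inl ⟨d, hdD, B, ⟨hB, hBne⟩, hBAd⟩
  · obtain ⟨B, hB, hBne, hBA, hBD⟩ :=
      cb.ax2b A hA.1 hA.2 D hDbase hDne hDnonempty hdisj hcard hmeet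
    exact Or.inr ⟨B, ⟨hB, hBne⟩, hBA, hBD⟩

section Greedy

open scoped Classical

variable {ι : Type u} [LinearOrder ι] [WellFoundedLT ι] (P : Set X → Prop) (e : ι → Set X)

variable (cb) in
/-- `∅` marks the stages at which no admissible region exists. -/
noncomputable def greedyFamily : ι → Set X :=
  WellFoundedLT.fix fun x prev ↦
    if h : ∃ d, cb.IsRegion d ∧ d ⊆ e x ∧ P d ∧ ∀ y (hy : y < x), Disjoint d (prev y hy)
    then h.choose else ∅

theorem greedyFamily_eq (x : ι) :
    cb.greedyFamily P e x =
      if h : ∃ d, cb.IsRegion d ∧ d ⊆ e x ∧ P d ∧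
          ∀ y (_ : y < x), Disjoint d (cb.greedyFamily P e y)
      then h.choose else ∅ :=
  WellFoundedLT.fix_eq _ x

theorem greedyFamily_spec {x : ι} (hx : (cb.greedyFamily P e x).Nonempty) :
    cb.IsRegion (cb.greedyFamily P e x) ∧ cb.greedyFamily P e x ⊆ e x ∧
      P (cb.greedyFamily P e x) ∧
        ∀ y < x, Disjoint (cb.greedyFamily P e x) (cb.greedyFamily P e y) := by
  rw [greedyFamily_eq] at hx ⊢
  split_ifs at hx ⊢ with h
  · exact h.choose_spec
  · exact absurd hx not_nonempty_empty

theorem greedyFamily_nonempty {x : ι} (h : ∃ d, cb.IsRegion d ∧ d ⊆ e x ∧ P d ∧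
      ∀ y < x, Disjoint d (cb.greedyFamily P e y)) :
    (cb.greedyFamily P e x).Nonempty := by
  rw [greedyFamily_eq, dif_pos h]
  exact h.choose_spec.1.2

theorem pairwise_disjoint_greedyFamily : Pairwise (Disjoint on cb.greedyFamily P e) := by
  have key : ∀ x y, y < x → Disjoint (cb.greedyFamily P e x) (cb.greedyFamily P e y) := by
    intro x y hyx
    obtain hx | hx := (cb.greedyFamily P e x).eq_empty_or_nonempty
    · simp [hx]
    · exact (greedyFamily_spec P e hx).2.2.2 y hyx
  intro x y hxy
  obtain h | h := hxy.lt_or_gt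
  · exact (key y x h).symm
  · exact key x y h

theorem isDenseFamily_greedyFamily
    (hP : ∀ A, cb.IsRegion A → ∃ B, cb.IsRegion B ∧ B ⊆ A ∧ P B)
    (he : ∀ A ∈ cb.base, ∃ x, e x = A) (hcard : ∀ x : ι, #(Iio x) < #cb.base) :
    cb.IsDenseFamily (range (cb.greedyFamily P e) \ {∅}) := by
  intro A hA
  obtain ⟨x, rfl⟩ := he A hA.1
  set g := cb.greedyFamily P e
  by_cases hx : (g x).Nonempty
  · exact ⟨g x, ⟨mem_range_self x, hx.ne_empty⟩, g x, (greedyFamily_spec P e hx).1,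
      subset_inter (greedyFamily_spec P e hx).2.1 subset_rfl⟩
  set D := g '' Iio x \ {∅}
  have hD : ∀ d ∈ D, cb.IsRegion d := by
    rintro _ ⟨⟨y, -, rfl⟩, hy⟩
    exact (greedyFamily_spec P e (nonempty_iff_ne_empty.2 hy)).1
  have hDdisj : D.Pairwise Disjoint := (pairwise_disjoint_greedyFamily P e).range_pairwise.mono
    (sdiff_subset.trans (image_subset_range g _))
  have hDcard : #D < #cb.base :=
    (mk_le_mk_of_subset sdiff_subset).trans_lt (mk_image_le.trans_lt (hcard x))
  obtain ⟨d, ⟨⟨y, -, rfl⟩, hy⟩, hdA⟩ | ⟨B, hB, hBA, hBD⟩ :=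
    exists_subregion_inter_or_disjoint hA hD hDdisj hDcard
  · exact ⟨g y, ⟨mem_range_self y, hy⟩, hdA⟩
  obtain ⟨d, hd, hdB, hPd⟩ := hP B hB
  refine absurd (greedyFamily_nonempty P e ⟨d, hd, hdB.trans hBA, hPd, fun y hyx ↦ ?_⟩) hx
  obtain hy | hy := (g y).eq_empty_or_nonempty
  · simp [g, hy]
  · exact (hBD (g y) ⟨mem_image_of_mem g hyx, hy.ne_empty⟩).mono_left hdB

end Greedy

theorem exists_pairwise_disjoint_isDenseFamily (P : Set X → Prop)
    (hP : ∀ A, cb.IsRegion A → ∃ B, cb.IsRegion B ∧ B ⊆ A ∧ P B) :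
    ∃ D : Set (Set X), (∀ d ∈ D, cb.IsRegion d ∧ P d) ∧ D.Pairwise Disjoint ∧
      cb.IsDenseFamily D := by
  obtain ⟨enum⟩ : Nonempty ((#cb.base).ord.ToType ≃ cb.base) := Cardinal.eq.1 (by simp)
  let e : (#cb.base).ord.ToType → Set X := fun x ↦ enum x
  have he : ∀ A ∈ cb.base, ∃ x, e x = A := fun A hA ↦ ⟨enum.symm ⟨A, hA⟩, by simp [e]⟩
  have hcard : ∀ x : (#cb.base).ord.ToType, #(Iio x) < #cb.base := fun x ↦ by
    simpa using mk_Iio_lt x (by simp)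
  refine ⟨range (cb.greedyFamily P e) \ {∅}, ?_, ?_,
    isDenseFamily_greedyFamily P e hP he hcard⟩
  · rintro _ ⟨⟨x, rfl⟩, hx⟩
    have := greedyFamily_spec P e (nonempty_iff_ne_empty.2 hx)
    exact ⟨this.1, this.2.2.1⟩
  · exact (pairwise_disjoint_greedyFamily P e).range_pairwise.mono sdiff_subset

theorem meager_of_forall_exists_meager_inter {S : Set X}
    (h : ∀ A, cb.IsRegion A → ∃ B, cb.IsRegion B ∧ B ⊆ A ∧ cb.Meager (S ∩ B)) :
    cb.Meager S := by
  obtain ⟨D, hD, hdisj, hdense⟩ := exists_pairwise_disjoint_isDenseFamily _ h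
  exact hdense.meager_of_meager_inter hdisj fun d hd ↦ (hD d hd).2

end CategoryBase

/-- The Fundamental Theorem: every abundant set is abundant everywhere in some region. -/
theorem stmt_6 {X : Type*} (cb : CategoryBase X) (S : Set X) (hS : cb.Abundant S) :
    ∃ C, cb.IsRegion C ∧ cb.AbundantEverywhereIn S C := by
  by_contra hno
  refine hS (cb.meager_of_forall_exists_meager_inter fun A hA ↦ ?_)
  simpa [CategoryBase.AbundantEverywhereIn, CategoryBase.Abundant] using
    fun h ↦ hno ⟨A, hA, h⟩
end

section
/- Let (X, C) be a category base and D a D-operator such that every region contains a nonempty D-open set. Then every set that is meager in (X, C) is of the first category in the D-topology τ(D). -/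
open Set

/-! A set `S` with `D S = ∅` is `D`-closed, and by monotonicity of `D` every `D`-open `U ⊆ S`
has `D U = ∅`; then `X = D X ⊆ D U ∪ D Uᶜ ⊆ Uᶜ` forces `U = ∅`. A closed set with empty interior
is nowhere dense, and every meager set of the category base satisfies `D S = ∅`. -/

section DOperator

variable {X : Type*} {D : Set X → Set X}

theorem monotone_of_map_union (hadd : ∀ S T : Set X, D (S ∪ T) = D S ∪ D T) : Monotone D :=
  fun S T hST => by
    rw [← union_eq_right.2 hST, hadd]
    exact subset_union_left

theorem DOpen.diff (hadd : ∀ S T : Set X, D (S ∪ T) = D S ∪ D T) {U S : Set X}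
    (hU : DOpen D U) (hS : D S = ∅) : DOpen D (U \ S) := by
  rw [DOpen, sdiff_eq, compl_inter, compl_compl, hadd, hS, union_empty]
  exact hU.trans subset_union_left

theorem DOpen.eq_empty_of_map_eq_empty (hX : D univ = univ)
    (hadd : ∀ S T : Set X, D (S ∪ T) = D S ∪ D T) {U : Set X} (hU : DOpen D U)
    (hDU : D U = ∅) : U = ∅ := by
  have hcompl : Uᶜ = univ := by
    rw [← univ_subset_iff, ← hX, ← union_compl_self U, hadd, hDU, empty_union]
    exact hU
  simpa using hcompl

theorem tauNowhereDense_of_map_eq_empty (hX : D univ = univ)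
    (hadd : ∀ S T : Set X, D (S ∪ T) = D S ∪ D T) {S : Set X} (hS : D S = ∅) :
    TauNowhereDense D S := by
  intro U hU hUne
  refine ⟨U \ S, hU.diff hadd hS, ?_, sdiff_subset, disjoint_sdiff_left⟩
  rw [nonempty_iff_ne_empty, Ne, sdiff_eq_empty]
  intro hUS
  have hDU : D U = ∅ := subset_empty_iff.1 (hS ▸ monotone_of_map_union hadd hUS)
  exact hUne.ne_empty (hU.eq_empty_of_map_eq_empty hX hadd hDU)

theorem TauNowhereDense.tauFirstCategory {S : Set X} (hS : TauNowhereDense D S) :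
    TauFirstCategory D S :=
  ⟨fun _ => S, fun _ => hS, (iUnion_const S).symm⟩

end DOperator

theorem stmt_12_general {X : Type*} (cb : CategoryBase X) (D : Set X → Set X)
    (hX : D Set.univ = Set.univ)
    (hmeager : ∀ S : Set X, cb.Meager S → D S = ∅)
    (hadd : ∀ S T : Set X, D (S ∪ T) = D S ∪ D T) :
    ∀ S : Set X, cb.Meager S → TauFirstCategory D S :=
  fun S hS => (tauNowhereDense_of_map_eq_empty hX hadd (hmeager S hS)).tauFirstCategory

/-- If every region contains a nonempty `D`-open set, then every meager set of
the category base is of first category in the `D`-topology. -/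
theorem stmt_12 {X : Type*} (cb : CategoryBase X) (D : Set X → Set X)
    (hX : D Set.univ = Set.univ)
    (hmeager : ∀ S : Set X, cb.Meager S → D S = ∅)
    (hadd : ∀ S T : Set X, D (S ∪ T) = D S ∪ D T)
    (hreg : ∀ A, cb.IsRegion A → ∃ U, DOpen D U ∧ U.Nonempty ∧ U ⊆ A) :
    ∀ S : Set X, cb.Meager S → TauFirstCategory D S :=
  stmt_12_general cb D hX hmeager hadd
end
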